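/- The dimension of the quotient of the complexified representation ring of a finite group W (acting on V) by the radical of the elliptic pairing equals the number of elliptic conjugacy classes of W, i.e., conjugacy classes of elements w with det(1−w on V) ≠ 0. -/

import Mathlib

open scoped BigOperators

/-- The elliptic pairing on `ℂ`-valued functions on `W`, relative to the action of `W` on `V`
via `ρ`. -/
noncomputable def ellipticPairing (W : Type*) [Group W] [Fintype W]
    {V : Type*} [AddCommGroup V] [Module ℂ V] [FiniteDimensional ℂ V]
    (ρ : Representation ℂ W V) (f g : W → ℂ) : ℂ :=
  (Fintype.card W : ℂ)⁻¹ * ∑ w : W, (starRingEnd ℂ) (f w) * g w *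
    LinearMap.det (LinearMap.id - ρ w)

/-! A class function `f` lies in the radical exactly when it vanishes on the elliptic elements:
pairing `f` with the class function `w ↦ f w * conj (det (1 - w))` gives
`|W|⁻¹ * ∑ w, |f w * det (1 - w)|²`. So the radical is the kernel of the restriction of class
functions to the elliptic conjugacy classes, and this restriction is onto the functions on those
classes. -/

open scoped ComplexConjugate

def IsClassFunction {G R : Type*} [Group G] (f : G → R) : Prop :=
  ∀ x w : G, f (x * w * x⁻¹) = f w

namespace IsClassFunction

variable {G R : Type*} [Group G] {f : G → R}

theorem apply_eq_of_isConj (hf : IsClassFunction f) {a b : G} (h : IsConj a b) : f a = f b := by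
  obtain ⟨c, rfl⟩ := isConj_iff.mp h
  exact (hf c a).symm

theorem apply_out_mk (hf : IsClassFunction f) (w : G) :
    f (Quotient.out (ConjClasses.mk w)) = f w :=
  hf.apply_eq_of_isConj (ConjClasses.mk_eq_mk_iff_isConj.mp (Quotient.out_eq _))

theorem comp_mk (φ : ConjClasses G → R) : IsClassFunction (φ ∘ ConjClasses.mk) := fun x w =>
  congrArg φ (ConjClasses.mk_eq_mk_iff_isConj.mpr (isConj_iff.mpr ⟨x⁻¹, by group⟩))

theorem mul [Mul R] {g : G → R} (hf : IsClassFunction f) (hg : IsClassFunction g) :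
    IsClassFunction (f * g) := fun x w => by
  simp only [Pi.mul_apply, hf x w, hg x w]

theorem comp {S : Type*} (hf : IsClassFunction f) (φ : R → S) : IsClassFunction (φ ∘ f) :=
  fun x w => congrArg φ (hf x w)

end IsClassFunction

theorem ConjClasses.mk_out {G : Type*} [Monoid G] (c : ConjClasses G) :
    ConjClasses.mk (Quotient.out c) = c :=
  Quotient.out_eq c

theorem Representation.isClassFunction_det_id_sub {k G V : Type*} [CommRing k] [Group G]
    [AddCommGroup V] [Module k V] (ρ : Representation k G V) :
    IsClassFunction fun w => LinearMap.det (LinearMap.id - ρ w) := fun x w => by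
  have hconj : (LinearMap.id : V →ₗ[k] V) - ρ (x * w * x⁻¹) =
      ρ x * ((LinearMap.id - ρ w) * ρ x⁻¹) := by
    rw [← Module.End.one_eq_id, sub_mul, one_mul, mul_sub, ← map_mul,
      mul_inv_cancel, map_one, ← map_mul, ← map_mul, ← mul_assoc]
  have det_inv : LinearMap.det (ρ x) * LinearMap.det (ρ x⁻¹) = 1 := by
    rw [← map_mul, ← map_mul, mul_inv_cancel, map_one, map_one]
  beta_reduce
  rw [hconj, map_mul, map_mul, mul_left_comm, det_inv, mul_one]

section EllipticPairing

variable {W V : Type*} [Group W] [Fintype W] [AddCommGroup V] [Module ℂ V]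
  [FiniteDimensional ℂ V] (ρ : Representation ℂ W V)

theorem ellipticPairing_eq_zero_of_forall_det_ne_zero {f : W → ℂ}
    (hf : ∀ w, LinearMap.det (LinearMap.id - ρ w) ≠ 0 → f w = 0) (g : W → ℂ) :
    ellipticPairing W ρ f g = 0 := by
  refine mul_eq_zero_of_right _ (Finset.sum_eq_zero fun w _ => ?_)
  by_cases hw : LinearMap.det (LinearMap.id - ρ w) = 0
  · rw [hw, mul_zero]
  · rw [hf w hw, map_zero, zero_mul, zero_mul]

theorem ellipticPairing_mul_conj_det (f : W → ℂ) :
    ellipticPairing W ρ f (fun w => f w * conj (LinearMap.det (LinearMap.id - ρ w))) =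
      (Fintype.card W : ℂ)⁻¹ *
        ∑ w, (Complex.normSq (f w * LinearMap.det (LinearMap.id - ρ w)) : ℂ) := by
  unfold ellipticPairing
  congr 1
  refine Finset.sum_congr rfl fun w _ => ?_
  rw [Complex.normSq_mul, Complex.ofReal_mul, ← Complex.mul_conj, ← Complex.mul_conj]
  ring

theorem eq_zero_of_ellipticPairing_mul_conj_det_eq_zero {f : W → ℂ}
    (h : ellipticPairing W ρ f (fun w => f w * conj (LinearMap.det (LinearMap.id - ρ w))) = 0)
    {w : W} (hw : LinearMap.det (LinearMap.id - ρ w) ≠ 0) : f w = 0 := by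
  rw [ellipticPairing_mul_conj_det, mul_eq_zero, inv_eq_zero, Nat.cast_eq_zero,
    or_iff_right Fintype.card_ne_zero, ← Complex.ofReal_sum, Complex.ofReal_eq_zero,
    Finset.sum_eq_zero_iff_of_nonneg fun _ _ => Complex.normSq_nonneg _] at h
  simpa [hw] using h w (Finset.mem_univ w)

theorem forall_ellipticPairing_eq_zero_iff {f : W → ℂ} (hf : IsClassFunction f) :
    (∀ g, IsClassFunction g → ellipticPairing W ρ f g = 0) ↔
      ∀ w, LinearMap.det (LinearMap.id - ρ w) ≠ 0 → f w = 0 :=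
  ⟨fun h _ => eq_zero_of_ellipticPairing_mul_conj_det_eq_zero ρ
      (h _ (hf.mul (ρ.isClassFunction_det_id_sub.comp conj))),
    fun h g _ => ellipticPairing_eq_zero_of_forall_det_ne_zero ρ h g⟩

end EllipticPairing

section RestrictToClasses

variable {G K : Type*} [Group G] [CommSemiring K] (S : Set (ConjClasses G))

noncomputable def restrictToClasses : (G → K) →ₗ[K] (S → K) :=
  LinearMap.funLeft K K fun c : S => Quotient.out c.1

theorem restrictToClasses_eq_zero_iff {f : G → K} (hf : IsClassFunction f) :
    restrictToClasses S f = 0 ↔ ∀ w, ConjClasses.mk w ∈ S → f w = 0 := by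
  rw [funext_iff]
  exact ⟨fun h w hw => hf.apply_out_mk w ▸ h ⟨_, hw⟩,
    fun h c => h _ ((ConjClasses.mk_out c.1).symm ▸ c.2)⟩

theorem surjective_restrictToClasses_comp_subtype {CF : Submodule K (G → K)}
    (hCF : ∀ f, IsClassFunction f → f ∈ CF) :
    Function.Surjective (restrictToClasses S ∘ₗ CF.subtype) := fun h =>
  ⟨⟨Function.extend Subtype.val h 0 ∘ ConjClasses.mk, hCF _ (.comp_mk _)⟩, funext fun c => by
    simp [restrictToClasses, LinearMap.funLeft_apply, ConjClasses.mk_out]⟩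

end RestrictToClasses

/-- The complexified representation ring of a finite group `W` is identified with the space
`CF` of class functions `W → ℂ`.  The dimension of its quotient by the radical of the
elliptic pairing equals the number of elliptic conjugacy classes of `W`, i.e. classes of
elements `w` with `det(1 - w on V) ≠ 0`. -/
theorem finrank_quotient_radical_ellipticPairing_eq_card_elliptic_classes
    (W : Type*) [Group W] [Fintype W]
    (V : Type*) [AddCommGroup V] [Module ℂ V] [FiniteDimensional ℂ V]
    (ρ : Representation ℂ W V)
    (CF rad : Submodule ℂ (W → ℂ))
    (hCF : (CF : Set (W → ℂ)) = {f | ∀ x w : W, f (x * w * x⁻¹) = f w})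
    (hrad : (rad : Set (W → ℂ)) =
      {f | (∀ x w : W, f (x * w * x⁻¹) = f w) ∧
        ∀ g ∈ CF, ellipticPairing W ρ f g = 0}) :
    Module.finrank ℂ (CF ⧸ (rad.comap CF.subtype)) =
      {c : ConjClasses W | ∃ w : W,
        ConjClasses.mk w = c ∧ LinearMap.det (LinearMap.id - ρ w) ≠ 0}.ncard := by
  classical
  have mem_CF (f : W → ℂ) : f ∈ CF ↔ IsClassFunction f := Set.ext_iff.mp hCF f
  set E := {c : ConjClasses W | ∃ w : W,
    ConjClasses.mk w = c ∧ LinearMap.det (LinearMap.id - ρ w) ≠ 0}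
  have mem_E (w : W) : ConjClasses.mk w ∈ E ↔ LinearMap.det (LinearMap.id - ρ w) ≠ 0 :=
    ⟨fun ⟨_, hw', hdet⟩ => ρ.isClassFunction_det_id_sub.apply_eq_of_isConj
      (ConjClasses.mk_eq_mk_iff_isConj.mp hw') ▸ hdet, fun hdet => ⟨w, rfl, hdet⟩⟩
  have ker_eq : rad.comap CF.subtype = LinearMap.ker (restrictToClasses E ∘ₗ CF.subtype) := by
    ext ⟨f, hf⟩
    rw [mem_CF] at hf
    rw [Submodule.mem_comap, LinearMap.mem_ker, LinearMap.comp_apply, Submodule.subtype_apply,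
      restrictToClasses_eq_zero_iff E hf, ← SetLike.mem_coe, hrad]
    simp only [mem_E]
    exact (and_iff_right hf).trans <| (forall_congr' fun g => imp_congr_left (mem_CF g)).trans
      (forall_ellipticPairing_eq_zero_iff ρ hf)
  rw [ker_eq, (LinearMap.quotKerEquivOfSurjective _
      (surjective_restrictToClasses_comp_subtype E fun f => (mem_CF f).2)).finrank_eq,
    Module.finrank_pi, ← Nat.card_eq_fintype_card, Nat.card_coe_set_eq]
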